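/- For every ω₀ > 0, one has 1 − ω₀² (G_{ω₀}(0) + G_{ω₀}(1)) = 2/(2 + ω₀² + ω₀ √(ω₀² + 4)). -/

import Mathlib

open Real

theorem sqrt_one_add_sq_div_four (a : ℝ) : √(1 + a ^ 2 / 4) = √(a ^ 2 + 4) / 2 := by
  rw [show 1 + a ^ 2 / 4 = (a ^ 2 + 4) / 2 ^ 2 by ring, sqrt_div' _ (sq_nonneg 2),
    sqrt_sq zero_le_two]

theorem D_explicit_formula (ω₀ : ℝ) (hω : 0 < ω₀) (G : ℤ → ℝ)
    (hG : ∀ x : ℤ, G x = (1 / (ω₀ * Real.sqrt (ω₀ ^ 2 + 4))) *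
        (1 + ω₀ ^ 2 / 2 + ω₀ * Real.sqrt (1 + ω₀ ^ 2 / 4)) ^ (-|x|)) :
    1 - ω₀ ^ 2 * (G 0 + G 1) = 2 / (2 + ω₀ ^ 2 + ω₀ * Real.sqrt (ω₀ ^ 2 + 4)) := by
  set s := √(ω₀ ^ 2 + 4)
  have hs_sq : s ^ 2 = ω₀ ^ 2 + 4 := sq_sqrt (by positivity)
  have hs : 0 < s := by positivity
  have hden : 0 < 2 + ω₀ ^ 2 + ω₀ * s := by positivity
  rw [hG 0, hG 1, sqrt_one_add_sq_div_four]
  simp only [abs_zero, neg_zero, zpow_zero, abs_one, zpow_neg_one]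
  field_simp
  linear_combination ω₀ * (2 + ω₀ ^ 2 + ω₀ * s) * hs_sq
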